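/- arXiv:2409.16369 — 4 statements merged into one kernel-verified Lean document; each statement's English description precedes it below -/
import Mathlib

section
/- With D the Dirichlet kernel of order R, D'(θ_μ) = (-1)^{μ}/(2 sin(θ_μ/2)) for θ_μ = 2πμ/(2R+1), μ = 1,...,R; equivalently D'(-θ_μ) = (-1)^{μ+1}/(2 sin(θ_μ/2)). -/
open Real Finset

/-!
Since `(2R+1)θ_μ/2 = μπ`, the numerator `sin ((2R+1)x/2)` of the Dirichlet kernel vanishes
at `±θ_μ`, so the quotient rule leaves only the derivative of the numerator,
`(2R+1)/2 · cos (μπ) = (2R+1)/2 · (-1)^μ`, divided by the denominator `(2R+1) sin (±θ_μ/2)`,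
which is nonzero because `0 < θ_μ/2 < π`.
-/

theorem HasDerivAt.div_of_eq_zero {𝕜 𝕜' : Type*} [NontriviallyNormedField 𝕜]
    [NontriviallyNormedField 𝕜'] [NormedAlgebra 𝕜 𝕜'] {f g : 𝕜 → 𝕜'} {f' g' : 𝕜'} {x : 𝕜}
    (hf : HasDerivAt f f' x) (hg : HasDerivAt g g' x) (hfx : f x = 0) (hgx : g x ≠ 0) :
    HasDerivAt (fun y => f y / g y) (f' / g x) x := by
  convert hf.fun_div hg hgx using 1
  rw [hfx, zero_mul, sub_zero]
  field_simp

theorem hasDerivAt_sin_mul_div_two (c x : ℝ) :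
    HasDerivAt (fun y => sin (c * y / 2)) (cos (c * x / 2) * (c / 2)) x := by
  simpa using (((hasDerivAt_id x).const_mul c).div_const 2).sin

theorem hasDerivAt_dirichletKernel_of_sin_eq_zero {c t : ℝ} (hc : c ≠ 0)
    (ht : sin (t / 2) ≠ 0) (h0 : sin (c * t / 2) = 0) :
    HasDerivAt (fun x => sin (c * x / 2) / (c * sin (x / 2)))
      (cos (c * t / 2) / (2 * sin (t / 2))) t := by
  have hden : HasDerivAt (fun y => c * sin (y / 2)) (c * (cos (t / 2) * (1 / 2))) t :=
    ((hasDerivAt_id t).div_const 2).sin.const_mul c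
  refine ((hasDerivAt_sin_mul_div_two c t).div_of_eq_zero hden h0
    (mul_ne_zero hc ht)).congr_deriv ?_
  field_simp

theorem sin_pi_mul_div_pos {a b : ℝ} (ha : 0 < a) (hab : a < b) : 0 < sin (π * a / b) := by
  have hb : 0 < b := ha.trans hab
  apply sin_pos_of_pos_of_lt_pi (by positivity)
  rw [div_lt_iff₀ hb]
  nlinarith [pi_pos]

theorem dirichlet_deriv_at_shift_points_general (R : ℕ) (D : ℝ → ℝ)
    (hD : ∀ x : ℝ, D x = Real.sin ((2 * R + 1) * x / 2) / ((2 * R + 1) * Real.sin (x / 2)))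
    (μ : ℕ) (hμ : 1 ≤ μ) (hμR : μ ≤ R) (θμ : ℝ) (hθ : θμ = 2 * Real.pi * μ / (2 * R + 1)) :
    deriv D θμ = (-1 : ℝ) ^ μ / (2 * Real.sin (θμ / 2)) ∧
    deriv D (-θμ) = (-1 : ℝ) ^ (μ + 1) / (2 * Real.sin (θμ / 2)) := by
  have hc : (2 * R + 1 : ℝ) ≠ 0 := by positivity
  have hμπ : (2 * R + 1) * θμ / 2 = μ * π := by
    rw [hθ]
    field_simp
  have hμπ' : (2 * R + 1) * -θμ / 2 = -(μ * π) := by linear_combination -hμπ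
  have hsin : 0 < sin (θμ / 2) := by
    rw [hθ, show 2 * π * μ / (2 * R + 1) / 2 = π * μ / (2 * R + 1) by ring]
    exact sin_pi_mul_div_pos (by exact_mod_cast hμ) (by exact_mod_cast (by omega : μ < 2 * R + 1))
  have hsin' : sin (-θμ / 2) ≠ 0 := by
    rw [neg_div, sin_neg, neg_ne_zero]
    exact hsin.ne'
  obtain rfl : D = fun x => sin ((2 * R + 1) * x / 2) / ((2 * R + 1) * sin (x / 2)) := funext hD
  constructor
  · rw [(hasDerivAt_dirichletKernel_of_sin_eq_zero hc hsin.ne'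
      (by rw [hμπ, sin_nat_mul_pi])).deriv, hμπ, cos_nat_mul_pi]
  · rw [(hasDerivAt_dirichletKernel_of_sin_eq_zero hc hsin'
      (by rw [hμπ', sin_neg, sin_nat_mul_pi, neg_zero])).deriv,
      hμπ', cos_neg, cos_nat_mul_pi, neg_div, sin_neg, pow_succ]
    field_simp

theorem dirichlet_deriv_at_shift_points (R : ℕ) (hR : 1 ≤ R) (D : ℝ → ℝ)
    (hD : ∀ x : ℝ, D x = Real.sin ((2 * R + 1) * x / 2) / ((2 * R + 1) * Real.sin (x / 2)))
    (μ : ℕ) (hμ : 1 ≤ μ) (hμR : μ ≤ R) (θμ : ℝ) (hθ : θμ = 2 * Real.pi * μ / (2 * R + 1)) :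
    deriv D θμ = (-1 : ℝ) ^ μ / (2 * Real.sin (θμ / 2)) ∧
    deriv D (-θμ) = (-1 : ℝ) ^ (μ + 1) / (2 * Real.sin (θμ / 2)) :=
  dirichlet_deriv_at_shift_points_general R D hD μ hμ hμR θμ hθ
end

section
/- For any trigonometric polynomial f(θ) = ∑_{k=-R}^{R} c_k e^{ikθ} and any k-th derivative order, f^{(k)}(θ) = ∑_{μ=-R}^{R} f(θ + θ_μ) D^{(k)}(-θ_μ), where θ_μ = 2πμ/(2R+1) and D is the Dirichlet kernel of order R. -/
/-!
Write `f` and `D` as trigonometric polynomials of degree `R` and differentiate termwise. Sampled at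
the `2R + 1` equispaced nodes `θ_μ`, the exponentials `e^{i j θ_μ}` with `|j| ≤ R` are orthogonal:
`∑_μ e^{i (j - l) θ_μ}` is a sum over the powers of a root of unity of order `2R + 1`, which vanishes
unless `j = l` since `|j - l| < 2R + 1`. Hence `∑_μ f(θ + θ_μ) D^{(k)}(-θ_μ)` picks out the diagonal
`∑_j c_j (i j)^k e^{i j θ} = f^{(k)}(θ)`.
-/

open Complex Finset

theorem IsPrimitiveRoot.sum_Icc_zpow_zpow {K : Type*} [Field K] {ζ : K} {N : ℕ} [NeZero N]
    (hζ : IsPrimitiveRoot ζ N) {a b : ℤ} (hab : b + 1 - a = N) (m : ℤ) :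
    ∑ μ ∈ Icc a b, (ζ ^ m) ^ μ = if (N : ℤ) ∣ m then (N : K) else 0 := by
  have hcard : (b + 1 - a).toNat = N := by omega
  split_ifs with hm
  · simp [(hζ.zpow_eq_one_iff_dvd m).2 hm, Int.card_Icc, hcard]
  · have hω : ζ ^ m ≠ 1 := fun h => hm ((hζ.zpow_eq_one_iff_dvd m).1 h)
    have hωN : (ζ ^ m) ^ N = 1 := by
      rw [← zpow_natCast, ← zpow_mul, mul_comm, zpow_mul, zpow_natCast, hζ.pow_eq_one, one_zpow]
    have hω₀ : ζ ^ m ≠ 0 := zpow_ne_zero _ (hζ.ne_zero (NeZero.ne N))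
    rw [Int.Icc_eq_finset_map, sum_map, hcard]
    simp only [Function.Embedding.trans_apply, Nat.castEmbedding_apply, addLeftEmbedding_apply,
      zpow_add₀ hω₀, zpow_natCast, ← mul_sum, geom_sum_eq hω, hωN, sub_self, zero_div, mul_zero]

theorem iteratedDeriv_cexp_mul_ofReal (z : ℂ) (n : ℕ) :
    iteratedDeriv n (fun x : ℝ => cexp (z * x)) = fun x : ℝ => z ^ n * cexp (z * x) := by
  induction n with
  | zero => simp
  | succ n ih =>
    rw [iteratedDeriv_succ, ih]
    ext x
    have hexp : HasDerivAt (fun x : ℝ => cexp (z * x)) (cexp (z * x) * z) x := by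
      simpa using ((hasDerivAt_id x).ofReal_comp.const_mul z).cexp
    rw [(hexp.const_mul (z ^ n)).deriv]
    ring

noncomputable def trigPoly (R : ℕ) (a : ℤ → ℂ) (x : ℝ) : ℂ :=
  ∑ j ∈ Icc (-(R : ℤ)) R, a j * cexp (I * j * x)

theorem iteratedDeriv_trigPoly (R : ℕ) (a : ℤ → ℂ) (n : ℕ) :
    iteratedDeriv n (trigPoly R a) = trigPoly R (fun j => (I * j) ^ n * a j) := by
  ext x
  have hsmooth (j : ℤ) : ContDiff ℝ n (fun x : ℝ => a j * cexp (I * j * x)) :=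
    contDiff_const.mul (contDiff_const.mul ofRealCLM.contDiff).cexp
  unfold trigPoly
  rw [iteratedDeriv_fun_sum (fun j _ => (hsmooth j).contDiffAt)]
  refine sum_congr rfl fun j _ => ?_
  rw [iteratedDeriv_const_mul_field, iteratedDeriv_cexp_mul_ofReal]
  ring

theorem sum_trigPoly_shift_mul_trigPoly_neg (R : ℕ) (a b : ℤ → ℂ) (θ : ℝ) :
    ∑ μ ∈ Icc (-(R : ℤ)) R,
      trigPoly R a (θ + 2 * Real.pi * μ / (2 * R + 1)) *
        trigPoly R b (-(2 * Real.pi * μ / (2 * R + 1))) =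
      (2 * R + 1) * trigPoly R (a * b) θ := by
  set S := Icc (-(R : ℤ)) R with hS
  set ζ := cexp (2 * Real.pi * I / (2 * R + 1 : ℕ))
  have hζ : IsPrimitiveRoot ζ (2 * R + 1) := isPrimitiveRoot_exp _ (by omega)
  have hexp (j l μ : ℤ) : cexp (I * j * ↑(θ + 2 * Real.pi * μ / (2 * R + 1))) *
      cexp (I * l * ↑(-(2 * Real.pi * μ / (2 * R + 1)))) =
        cexp (I * j * θ) * (ζ ^ (j - l)) ^ μ := by
    rw [← zpow_mul, ← exp_int_mul, ← exp_add, ← exp_add]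
    congr 1
    push_cast
    field_simp
    ring
  have horth : ∀ j ∈ S, ∀ l ∈ S,
      ∑ μ ∈ S, (ζ ^ (j - l)) ^ μ = if j = l then 2 * (R : ℂ) + 1 else 0 := by
    intro j hj l hl
    have hdvd : ((2 * R + 1 : ℕ) : ℤ) ∣ j - l ↔ j = l := by
      refine ⟨fun h => sub_eq_zero.1 (Int.eq_zero_of_dvd_of_natAbs_lt_natAbs h ?_), ?_⟩
      · simp only [S, mem_Icc] at hj hl; omega
      · rintro rfl; simp
    rw [hζ.sum_Icc_zpow_zpow (by push_cast; ring), if_congr hdvd rfl rfl]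
    push_cast
    rfl
  calc _ = ∑ j ∈ S, ∑ l ∈ S, a j * b l * cexp (I * j * θ) * ∑ μ ∈ S, (ζ ^ (j - l)) ^ μ := by
        simp_rw [trigPoly, sum_mul_sum, mul_sum, ← hS]
        rw [sum_comm]
        refine sum_congr rfl fun j _ => ?_
        rw [sum_comm]
        refine sum_congr rfl fun l _ => sum_congr rfl fun μ _ => ?_
        rw [mul_mul_mul_comm, hexp]
        ring
    _ = ∑ j ∈ S, ∑ l ∈ S, a j * b l * cexp (I * j * θ) * if j = l then 2 * (R : ℂ) + 1 else 0 :=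
        sum_congr rfl fun j hj => sum_congr rfl fun l hl => by rw [horth j hj l hl]
    _ = (2 * R + 1) * trigPoly R (a * b) θ := by
        simp only [mul_ite, mul_zero, sum_ite_eq, trigPoly, mul_sum]
        refine sum_congr rfl fun j hj => ?_
        rw [if_pos hj, Pi.mul_apply]
        ring

theorem generalized_parameter_shift_rule_general (R : ℕ) (c : ℤ → ℂ)
    (f : ℝ → ℂ)
    (hf : ∀ θ : ℝ, f θ = ∑ k ∈ Finset.Icc (-(R : ℤ)) R, c k * Complex.exp (Complex.I * k * θ))
    (D : ℝ → ℂ)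
    (hD : ∀ x : ℝ, D x = (1 / (2 * (R : ℂ) + 1)) *
      ∑ j ∈ Finset.Icc (-(R : ℤ)) R, Complex.exp (Complex.I * j * x))
    (θpt : ℤ → ℝ) (hθ : ∀ μ : ℤ, θpt μ = 2 * Real.pi * μ / (2 * R + 1))
    (k : ℕ) :
    ∀ θ : ℝ, iteratedDeriv k f θ =
      ∑ μ ∈ Finset.Icc (-(R : ℤ)) R, f (θ + θpt μ) * iteratedDeriv k D (-θpt μ) := by
  obtain rfl : f = trigPoly R c := funext hf
  obtain rfl : D = trigPoly R fun _ => 1 / (2 * R + 1) := funext fun x => (hD x).trans (mul_sum ..)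
  obtain rfl : θpt = fun μ : ℤ => 2 * Real.pi * μ / (2 * R + 1) := funext hθ
  intro θ
  rw [iteratedDeriv_trigPoly, iteratedDeriv_trigPoly, sum_trigPoly_shift_mul_trigPoly_neg, trigPoly,
    trigPoly, mul_sum]
  have hN : (2 * R + 1 : ℂ) ≠ 0 := by exact_mod_cast Nat.succ_ne_zero (2 * R)
  refine sum_congr rfl fun j _ => ?_
  rw [Pi.mul_apply]
  field_simp

theorem generalized_parameter_shift_rule (R : ℕ) (hR : 1 ≤ R) (c : ℤ → ℂ)
    (f : ℝ → ℂ)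
    (hf : ∀ θ : ℝ, f θ = ∑ k ∈ Finset.Icc (-(R : ℤ)) R, c k * Complex.exp (Complex.I * k * θ))
    (D : ℝ → ℂ)
    (hD : ∀ x : ℝ, D x = (1 / (2 * (R : ℂ) + 1)) *
      ∑ j ∈ Finset.Icc (-(R : ℤ)) R, Complex.exp (Complex.I * j * x))
    (θpt : ℤ → ℝ) (hθ : ∀ μ : ℤ, θpt μ = 2 * Real.pi * μ / (2 * R + 1))
    (k : ℕ) :
    ∀ θ : ℝ, iteratedDeriv k f θ =
      ∑ μ ∈ Finset.Icc (-(R : ℤ)) R, f (θ + θpt μ) * iteratedDeriv k D (-θpt μ) :=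
  generalized_parameter_shift_rule_general R c f hf D hD θpt hθ k
end

section
/- For any trigonometric polynomial f(θ) = ∑_{k=-R}^{R} c_k e^{ikθ}, the first derivative satisfies f'(θ) = ∑_{μ=1}^{R} (f(θ + θ_μ) - f(θ - θ_μ)) · (-1)^{μ+1}/(2 sin(θ_μ/2)), where θ_μ = 2πμ/(2R+1). -/
/-!
By linearity it suffices to treat `f θ = exp (i k θ)` with `|k| ≤ R`, for which
`f (θ + t) - f (θ - t) = 2 i sin (k t) f θ`; so one needs
`∑_{μ=1}^R (-1)^(μ+1) sin (k θ_μ) / sin (θ_μ / 2) = k`. Expanding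
`sin (k θ) / sin (θ / 2) = ∑_{j=1}^k 2 cos ((2j - 1) θ / 2)` reduces this to
`∑_{μ=1}^R (-1)^(μ+1) 2 cos ((2j - 1) π μ / (2R + 1)) = 1` for `1 ≤ j ≤ R`. Absorbing `(-1)^μ`
into the angle turns the left side into minus the Dirichlet kernel sum `∑_{μ=1}^R 2 cos (μ φ)` at
`φ = 2π (R + j) / (2R + 1)`, which is `-1` because `sin ((2R + 1) φ / 2) = 0 ≠ sin (φ / 2)`.
-/

open Complex Finset

open scoped Real

theorem sin_mul_sum_Icc_two_cos (a b : ℝ) (n : ℕ) :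
    Real.sin a * ∑ j ∈ Icc 1 n, 2 * Real.cos (b + (2 * j - 1) * a) =
      Real.sin (b + 2 * n * a) - Real.sin b := by
  induction n with
  | zero => simp
  | succ n ih =>
    have hsub : a - (b + (2 * ↑(n + 1) - 1) * a) = -(b + 2 * n * a) := by push_cast; ring
    have hadd : a + (b + (2 * ↑(n + 1) - 1) * a) = b + 2 * ↑(n + 1) * a := by push_cast; ring
    rw [sum_Icc_succ_top (by omega), mul_add, ih, ← mul_assoc, mul_comm _ (2 : ℝ),
      Real.two_mul_sin_mul_cos, hsub, hadd, Real.sin_neg]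
    ring

theorem sin_half_mul_sum_Icc_two_cos (φ : ℝ) (R : ℕ) :
    Real.sin (φ / 2) * ∑ μ ∈ Icc 1 R, 2 * Real.cos (μ * φ) =
      Real.sin ((2 * R + 1) * φ / 2) - Real.sin (φ / 2) := by
  convert sin_mul_sum_Icc_two_cos (φ / 2) (φ / 2) R using 3 <;> ring_nf

theorem sum_Icc_two_cos_mul_eq_neg_one {φ : ℝ} {R : ℕ} (hφ : Real.sin (φ / 2) ≠ 0)
    (hR : Real.sin ((2 * R + 1) * φ / 2) = 0) :
    ∑ μ ∈ Icc 1 R, 2 * Real.cos (μ * φ) = -1 := by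
  apply mul_left_cancel₀ hφ
  rw [sin_half_mul_sum_Icc_two_cos, hR]
  ring

theorem sin_pi_mul_div_pos_s9 {x y : ℝ} (hx : 0 < x) (hxy : x < y) : 0 < Real.sin (π * x / y) := by
  have hy : 0 < y := hx.trans hxy
  apply Real.sin_pos_of_pos_of_lt_pi (by positivity)
  rw [div_lt_iff₀ hy]
  exact mul_lt_mul_of_pos_left hxy Real.pi_pos

theorem sum_Icc_neg_one_pow_mul_two_cos {R j : ℕ} (hj : j ∈ Icc 1 R) :
    ∑ μ ∈ Icc 1 R, (-1 : ℝ) ^ (μ + 1) * (2 * Real.cos (μ * ((2 * j - 1) * π / (2 * R + 1)))) =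
      1 := by
  obtain ⟨hj₁, hjR⟩ := mem_Icc.mp hj
  set φ : ℝ := 2 * (R + j) * π / (2 * R + 1)
  have hshift (μ : ℕ) : (-1 : ℝ) ^ (μ + 1) * (2 * Real.cos (μ * ((2 * j - 1) * π / (2 * R + 1)))) =
      -(2 * Real.cos (μ * φ)) := by
    have : (μ : ℝ) * φ = μ * ((2 * j - 1) * π / (2 * R + 1)) + μ * π := by
      simp only [φ]; field_simp; ring
    rw [this, Real.cos_add_nat_mul_pi, pow_succ]
    ring
  have hφ : 0 < Real.sin (φ / 2) := by
    rw [show φ / 2 = π * (R + j : ℕ) / (2 * R + 1 : ℕ) by simp only [φ]; push_cast; ring]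
    exact sin_pi_mul_div_pos_s9 (by norm_cast; omega) (by norm_cast; omega)
  have hN : Real.sin ((2 * R + 1) * φ / 2) = 0 := by
    rw [show (2 * R + 1) * φ / 2 = (R + j : ℕ) * π by simp only [φ]; push_cast; field_simp]
    exact Real.sin_nat_mul_pi _
  rw [sum_congr rfl fun μ _ => hshift μ, sum_neg_distrib,
    sum_Icc_two_cos_mul_eq_neg_one hφ.ne' hN, neg_neg]

noncomputable section

def shiftAngle (R μ : ℕ) : ℝ := 2 * π * μ / (2 * R + 1)

def shiftWeight (R μ : ℕ) : ℝ := (-1) ^ (μ + 1) / (2 * Real.sin (shiftAngle R μ / 2))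

end

theorem sin_half_shiftAngle_pos {R μ : ℕ} (hμ : μ ∈ Icc 1 R) :
    0 < Real.sin (shiftAngle R μ / 2) := by
  obtain ⟨hμ₁, hμR⟩ := mem_Icc.mp hμ
  rw [show shiftAngle R μ / 2 = π * μ / (2 * R + 1 : ℕ) by unfold shiftAngle; push_cast; ring]
  exact sin_pi_mul_div_pos_s9 (by norm_cast) (by norm_cast; omega)

theorem sum_sin_nat_mul_shiftAngle_mul_shiftWeight {R k : ℕ} (hk : k ≤ R) :
    ∑ μ ∈ Icc 1 R, Real.sin (k * shiftAngle R μ) * shiftWeight R μ = k / 2 := by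
  have hterm (μ) (hμ : μ ∈ Icc 1 R) : Real.sin (k * shiftAngle R μ) * shiftWeight R μ =
      (∑ j ∈ Icc 1 k,
        (-1 : ℝ) ^ (μ + 1) * (2 * Real.cos (μ * ((2 * j - 1) * π / (2 * R + 1))))) / 2 := by
    have hsin := sin_mul_sum_Icc_two_cos (shiftAngle R μ / 2) 0 k
    rw [Real.sin_zero, sub_zero, zero_add,
      show 2 * k * (shiftAngle R μ / 2) = k * shiftAngle R μ by ring] at hsin
    rw [← hsin, shiftWeight, mul_sum, sum_div, sum_mul]
    refine sum_congr rfl fun j _ => ?_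
    have hsin_half := (sin_half_shiftAngle_pos hμ).ne'
    rw [show (0 : ℝ) + (2 * j - 1) * (shiftAngle R μ / 2) = μ * ((2 * j - 1) * π / (2 * R + 1)) by
      unfold shiftAngle; ring]
    field_simp
  rw [sum_congr rfl hterm, ← sum_div, sum_comm,
    sum_congr rfl fun j hj => sum_Icc_neg_one_pow_mul_two_cos (Icc_subset_Icc_right hk hj)]
  simp

theorem sum_sin_int_mul_shiftAngle_mul_shiftWeight {R : ℕ} {k : ℤ} (hk : k ∈ Icc (-(R : ℤ)) R) :
    ∑ μ ∈ Icc 1 R, Real.sin (k * shiftAngle R μ) * shiftWeight R μ = k / 2 := by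
  obtain ⟨hk₁, hkR⟩ := mem_Icc.mp hk
  obtain ⟨n, rfl | rfl⟩ := Int.eq_nat_or_neg k
  · simpa using sum_sin_nat_mul_shiftAngle_mul_shiftWeight (show n ≤ R by omega)
  · simp only [Int.cast_neg, Int.cast_natCast, neg_mul, Real.sin_neg, sum_neg_distrib,
      sum_sin_nat_mul_shiftAngle_mul_shiftWeight (show n ≤ R by omega), neg_div]

theorem exp_I_mul_add_sub_exp_I_mul_sub (k θ t : ℝ) :
    exp (I * k * ((θ + t : ℝ) : ℂ)) - exp (I * k * ((θ - t : ℝ) : ℂ)) =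
      exp (I * k * θ) * (2 * I * (Real.sin (k * t) : ℂ)) := by
  have hplus : I * k * ((θ + t : ℝ) : ℂ) = I * k * θ + (k * t : ℝ) * I := by push_cast; ring
  have hminus : I * k * ((θ - t : ℝ) : ℂ) = I * k * θ + -(k * t : ℝ) * I := by push_cast; ring
  rw [hplus, hminus, exp_add, exp_add, ofReal_sin, Complex.sin]
  linear_combination exp (I * k * θ) * (exp ((k * t : ℝ) * I) - exp (-(k * t : ℝ) * I)) * I_sq

theorem sum_exp_shift_sub_mul_shiftWeight {R : ℕ} {k : ℤ} (hk : k ∈ Icc (-(R : ℤ)) R) (θ : ℝ) :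
    ∑ μ ∈ Icc 1 R, (exp (I * k * ((θ + shiftAngle R μ : ℝ) : ℂ)) -
        exp (I * k * ((θ - shiftAngle R μ : ℝ) : ℂ))) * (shiftWeight R μ : ℂ) =
      I * k * exp (I * k * θ) := by
  have hsum : ∑ μ ∈ Icc 1 R, (Real.sin (k * shiftAngle R μ) : ℂ) * (shiftWeight R μ : ℂ) =
      k / 2 := by exact_mod_cast sum_sin_int_mul_shiftAngle_mul_shiftWeight hk
  simp_rw [← Complex.ofReal_intCast, exp_I_mul_add_sub_exp_I_mul_sub, mul_assoc, ← mul_sum]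
  rw [hsum]
  push_cast
  ring

theorem hasDerivAt_sum_mul_exp_I_mul (s : Finset ℤ) (c : ℤ → ℂ) (θ : ℝ) :
    HasDerivAt (fun x : ℝ => ∑ k ∈ s, c k * exp (I * k * x))
      (∑ k ∈ s, c k * (I * k * exp (I * k * θ))) θ := by
  refine HasDerivAt.fun_sum fun k _ => HasDerivAt.const_mul (c k) ?_
  have hlin : HasDerivAt (fun x : ℝ => I * k * (x : ℂ)) (I * k) θ := by
    simpa using (hasDerivAt_id θ).ofReal_comp.const_mul (I * k)
  simpa [mul_comm] using hlin.cexp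

theorem first_order_gpsr_general (R : ℕ) (c : ℤ → ℂ)
    (f : ℝ → ℂ)
    (hf : ∀ θ : ℝ, f θ = ∑ k ∈ Finset.Icc (-(R : ℤ)) R, c k * Complex.exp (Complex.I * k * θ))
    (θpt : ℕ → ℝ) (hθ : ∀ μ : ℕ, θpt μ = 2 * Real.pi * μ / (2 * R + 1)) :
    ∀ θ : ℝ, deriv f θ =
      ∑ μ ∈ Finset.Icc 1 R, (f (θ + θpt μ) - f (θ - θpt μ)) *
        (((-1 : ℝ) ^ (μ + 1) / (2 * Real.sin (θpt μ / 2)) : ℝ) : ℂ) := by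
  intro θ
  obtain rfl : θpt = shiftAngle R := funext hθ
  obtain rfl : f = fun x : ℝ => ∑ k ∈ Icc (-(R : ℤ)) R, c k * exp (I * k * x) := funext hf
  change _ = ∑ μ ∈ Icc 1 R, _ * (shiftWeight R μ : ℂ)
  rw [(hasDerivAt_sum_mul_exp_I_mul _ c θ).deriv]
  simp only [← sum_sub_distrib, ← mul_sub, sum_mul]
  rw [sum_comm]
  refine sum_congr rfl fun k hk => ?_
  rw [sum_congr rfl fun μ _ => mul_assoc (c k) _ _, ← mul_sum,
    sum_exp_shift_sub_mul_shiftWeight hk]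

theorem first_order_gpsr (R : ℕ) (hR : 1 ≤ R) (c : ℤ → ℂ)
    (f : ℝ → ℂ)
    (hf : ∀ θ : ℝ, f θ = ∑ k ∈ Finset.Icc (-(R : ℤ)) R, c k * Complex.exp (Complex.I * k * θ))
    (θpt : ℕ → ℝ) (hθ : ∀ μ : ℕ, θpt μ = 2 * Real.pi * μ / (2 * R + 1)) :
    ∀ θ : ℝ, deriv f θ =
      ∑ μ ∈ Finset.Icc 1 R, (f (θ + θpt μ) - f (θ - θpt μ)) *
        (((-1 : ℝ) ^ (μ + 1) / (2 * Real.sin (θpt μ / 2)) : ℝ) : ℂ) :=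
  first_order_gpsr_general R c f hf θpt hθ
end

section
/- For the Dirichlet kernel D of order R, ∑_{μ=1}^{R} 1/(2 sin²(θ_μ/2)) = R(R+1)/3, where θ_μ = 2πμ/(2R+1). -/
/-!
With `n = 2R + 1` the terms are symmetric under `μ ↦ n - μ`, so it suffices to show
`∑_{0<μ<n} 1 / sin² (πμ/n) = (n² - 1) / 3`. Write `W(z) = ∑_{k<n} k z^k`. For an `n`-th root of
unity `w ≠ 1` one has `(1 - w) W(w) = -n`, and for `w = e^{2πiμ/n}` also
`(1 - w)(1 - w⁻¹) = 4 sin² (πμ/n)`, so `1 / sin² (πμ/n) = 4 W(w) W(w⁻¹) / n²`. Summed over all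
`n`-th roots of unity, `W(w) W(w⁻¹)` gives `n ∑_{k<n} k²` by Parseval's identity; the term `w = 1`
is `(∑_{k<n} k)²`, and what remains is `n² (n² - 1) / 12`.
-/

open Real Finset

section ArithGeomSum

variable {R K : Type*} [CommRing R] [Field K]

def arithGeomSum (n : ℕ) (z : R) : R := ∑ k ∈ range n, (k : R) * z ^ k

theorem one_sub_mul_arithGeomSum (n : ℕ) (z : R) :
    (1 - z) * arithGeomSum n z = ∑ k ∈ range n, z ^ (k + 1) - n * z ^ n := by
  induction n with
  | zero => simp [arithGeomSum]
  | succ n ih =>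
    rw [arithGeomSum, sum_range_succ, mul_add, ← arithGeomSum, ih, sum_range_succ]
    push_cast
    ring

theorem geom_sum_eq_zero_of_pow_eq_one {w : K} {n : ℕ} (hw : w ^ n = 1) (hw1 : w ≠ 1) :
    ∑ k ∈ range n, w ^ k = 0 := by
  rw [geom_sum_eq hw1, hw, sub_self, zero_div]

theorem one_sub_mul_arithGeomSum_of_pow_eq_one {w : K} {n : ℕ} (hw : w ^ n = 1) (hw1 : w ≠ 1) :
    (1 - w) * arithGeomSum n w = -n := by
  simp_rw [one_sub_mul_arithGeomSum, pow_succ, ← sum_mul,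
    geom_sum_eq_zero_of_pow_eq_one hw hw1, hw]
  ring

theorem one_sub_mul_one_sub_inv_mul_arithGeomSum_mul_arithGeomSum_inv {w : K} {n : ℕ}
    (hw : w ^ n = 1) (hw1 : w ≠ 1) :
    (1 - w) * (1 - w⁻¹) * (arithGeomSum n w * arithGeomSum n w⁻¹) = n ^ 2 := by
  have hw' : w⁻¹ ^ n = 1 := by rw [inv_pow, hw, inv_one]
  calc
    _ = ((1 - w) * arithGeomSum n w) * ((1 - w⁻¹) * arithGeomSum n w⁻¹) := by ring
    _ = n ^ 2 := by
      rw [one_sub_mul_arithGeomSum_of_pow_eq_one hw hw1,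
        one_sub_mul_arithGeomSum_of_pow_eq_one hw' (inv_ne_one.mpr hw1)]
      ring

end ArithGeomSum

section Parseval

variable {K : Type*} [Field K] {ζ : K} {n : ℕ}

theorem IsPrimitiveRoot.sum_range_pow_pow_mul_inv_pow (hζ : IsPrimitiveRoot ζ n) {j k : ℕ}
    (hj : j < n) (hk : k < n) :
    ∑ μ ∈ range n, (ζ ^ μ) ^ j * (ζ ^ μ)⁻¹ ^ k = if j = k then (n : K) else 0 := by
  have hζ0 : ζ ≠ 0 := hζ.ne_zero (by omega)
  have hterm : ∀ μ, (ζ ^ μ) ^ j * (ζ ^ μ)⁻¹ ^ k = (ζ ^ j * (ζ ^ k)⁻¹) ^ μ := fun μ => by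
    rw [mul_pow, inv_pow, inv_pow, ← pow_mul, ← pow_mul, ← pow_mul, ← pow_mul, mul_comm μ j,
      mul_comm μ k]
  simp_rw [hterm]
  split_ifs with hjk
  · simp [hjk, hζ0]
  · refine geom_sum_eq_zero_of_pow_eq_one ?_ ?_
    · rw [mul_pow, inv_pow, ← pow_mul, ← pow_mul, mul_comm j, mul_comm k, pow_mul, pow_mul,
        hζ.pow_eq_one, one_pow, one_pow, inv_one, mul_one]
    · rw [Ne, mul_inv_eq_one₀ (pow_ne_zero _ hζ0)]
      exact fun h => hjk (hζ.pow_inj hj hk h)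

theorem IsPrimitiveRoot.sum_range_parseval (hζ : IsPrimitiveRoot ζ n) (f g : ℕ → K) :
    ∑ μ ∈ range n, (∑ j ∈ range n, f j * (ζ ^ μ) ^ j) * ∑ k ∈ range n, g k * (ζ ^ μ)⁻¹ ^ k =
      n * ∑ j ∈ range n, f j * g j := by
  calc
    _ = ∑ j ∈ range n, ∑ k ∈ range n,
        f j * g k * ∑ μ ∈ range n, (ζ ^ μ) ^ j * (ζ ^ μ)⁻¹ ^ k := by
      simp_rw [sum_mul_sum, mul_sum]
      rw [sum_comm]
      refine sum_congr rfl fun j _ => ?_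
      rw [sum_comm]
      refine sum_congr rfl fun k _ => sum_congr rfl fun μ _ => ?_
      ring
    _ = ∑ j ∈ range n, f j * g j * n := by
      refine sum_congr rfl fun j hj => ?_
      rw [mem_range] at hj
      rw [sum_congr rfl fun k hk => by
        rw [hζ.sum_range_pow_pow_mul_inv_pow hj (mem_range.mp hk)]]
      simp [mem_range.mpr hj]
    _ = _ := by rw [mul_sum]; simp_rw [mul_comm _ (n : K)]

end Parseval

theorem two_mul_sum_range_natCast {R : Type*} [CommRing R] (n : ℕ) :
    2 * ∑ k ∈ range n, (k : R) = n * (n - 1) := by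
  induction n with
  | zero => simp
  | succ n ih => rw [sum_range_succ, mul_add, ih]; push_cast; ring

theorem six_mul_sum_range_natCast_sq {R : Type*} [CommRing R] (n : ℕ) :
    6 * ∑ k ∈ range n, (k : R) ^ 2 = n * (n - 1) * (2 * n - 1) := by
  induction n with
  | zero => simp
  | succ n ih => rw [sum_range_succ, mul_add, ih]; push_cast; ring

theorem Complex.one_sub_exp_mul_one_sub_inv_exp (y : ℂ) :
    (1 - exp (2 * y * I)) * (1 - (exp (2 * y * I))⁻¹) = 4 * sin y ^ 2 := by
  have hexp := exp_ne_zero (2 * y * I)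
  calc
    _ = 2 - (exp (2 * y * I) + exp (-(2 * y * I))) := by
      rw [exp_neg]; field_simp; ring
    _ = 4 * sin y ^ 2 := by
      rw [← neg_mul, ← two_cos, cos_two_mul, cos_sq']; ring

theorem sum_Ico_one_div_sin_sq (n : ℕ) (hn : n ≠ 0) :
    ∑ μ ∈ Ico 1 n, 1 / sin (π * μ / n) ^ 2 = ((n : ℝ) ^ 2 - 1) / 3 := by
  set ζ := Complex.exp (2 * π * Complex.I / n)
  have hζ : IsPrimitiveRoot ζ n := Complex.isPrimitiveRoot_exp n hn
  have hnC : (n : ℂ) ≠ 0 := Nat.cast_ne_zero.mpr hn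
  have hterm : ∀ μ ∈ Ico 1 n, ((1 / sin (π * μ / n) ^ 2 : ℝ) : ℂ) =
      4 * (arithGeomSum n (ζ ^ μ) * arithGeomSum n (ζ ^ μ)⁻¹) / n ^ 2 := by
    intro μ hμ
    obtain ⟨hμ1, hμn⟩ := mem_Ico.mp hμ
    have hw : ζ ^ μ = Complex.exp (2 * ((π * μ / n : ℝ) : ℂ) * Complex.I) := by
      rw [← Complex.exp_nat_mul]; push_cast; field_simp
    have hmod : 4 * (sin (π * μ / n) : ℂ) ^ 2 *
        (arithGeomSum n (ζ ^ μ) * arithGeomSum n (ζ ^ μ)⁻¹) = n ^ 2 := by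
      have h := one_sub_mul_one_sub_inv_mul_arithGeomSum_mul_arithGeomSum_inv
        (by rw [← pow_mul, mul_comm, pow_mul, hζ.pow_eq_one, one_pow] : (ζ ^ μ) ^ n = 1)
        (hζ.pow_ne_one_of_pos_of_lt (Nat.one_le_iff_ne_zero.mp hμ1) hμn)
      rwa [hw, Complex.one_sub_exp_mul_one_sub_inv_exp, ← hw, ← Complex.ofReal_sin] at h
    have hsin : (sin (π * μ / n) : ℂ) ≠ 0 := by
      rintro h
      rw [h] at hmod
      exact hnC (by simpa using hmod.symm)
    rw [Complex.ofReal_div, Complex.ofReal_one, Complex.ofReal_pow, eq_div_iff (pow_ne_zero 2 hnC),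
      ← hmod]
    field_simp
  have hsum : ∑ μ ∈ Ico 1 n, arithGeomSum n (ζ ^ μ) * arithGeomSum n (ζ ^ μ)⁻¹ =
      n * ∑ k ∈ range n, (k : ℂ) ^ 2 - (∑ k ∈ range n, (k : ℂ)) ^ 2 := by
    have hparseval : ∑ μ ∈ range n, arithGeomSum n (ζ ^ μ) * arithGeomSum n (ζ ^ μ)⁻¹ =
        n * ∑ k ∈ range n, (k : ℂ) * k :=
      hζ.sum_range_parseval _ _
    rw [range_eq_Ico, sum_eq_sum_Ico_succ_bot (Nat.pos_of_ne_zero hn), ← range_eq_Ico]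
      at hparseval
    simp only [arithGeomSum, pow_zero, inv_one, one_pow, mul_one, zero_add, ← sq] at hparseval ⊢
    linear_combination hparseval
  apply Complex.ofReal_injective
  rw [Complex.ofReal_sum, sum_congr rfl hterm, ← sum_div, ← mul_sum, hsum]
  push_cast
  field_simp
  linear_combination (2 * n : ℂ) * six_mul_sum_range_natCast_sq (R := ℂ) n -
    3 * (2 * ∑ k ∈ range n, (k : ℂ) + n * (n - 1)) * two_mul_sum_range_natCast (R := ℂ) n

theorem sum_Ico_one_two_mul_add_one_of_symm {M : Type*} [AddCommMonoid M] (f : ℕ → M) (R : ℕ)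
    (hf : ∀ μ ∈ Icc 1 R, f (2 * R + 1 - μ) = f μ) :
    ∑ μ ∈ Ico 1 (2 * R + 1), f μ = 2 • ∑ μ ∈ Icc 1 R, f μ := by
  have hreflect : ∑ μ ∈ Ico (R + 1) (2 * R + 1), f μ = ∑ μ ∈ Icc 1 R, f μ := by
    rw [← sum_congr rfl hf, ← Ico_add_one_right_eq_Icc, sum_Ico_reflect f 1 (by omega),
      show 2 * R + 1 + 1 - (R + 1) = R + 1 by omega, Nat.add_sub_cancel]
  rw [← sum_Ico_consecutive f (by omega : 1 ≤ R + 1) (by omega : R + 1 ≤ 2 * R + 1), hreflect,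
    Ico_add_one_right_eq_Icc, two_nsmul]

theorem sum_inv_sin_sq_general (R : ℕ) :
    ∑ μ ∈ Finset.Icc 1 R, (1 : ℝ) / (2 * Real.sin (Real.pi * μ / (2 * R + 1)) ^ 2) =
      (R : ℝ) * (R + 1) / 3 := by
  have hsymm := sum_Ico_one_two_mul_add_one_of_symm
    (fun μ => 1 / sin (π * μ / (2 * R + 1 : ℕ)) ^ 2) R fun μ hμ => by
      have hμR : μ ≤ 2 * R + 1 := by linarith [(mem_Icc.mp hμ).2]
      have hn : ((2 * R + 1 : ℕ) : ℝ) ≠ 0 := by positivity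
      rw [Nat.cast_sub hμR, mul_sub, sub_div, mul_div_cancel_right₀ _ hn, sin_pi_sub]
  rw [sum_Ico_one_div_sin_sq _ (by omega), nsmul_eq_mul] at hsymm
  push_cast at hsymm
  simp_rw [one_div, mul_inv, ← mul_sum, ← one_div]
  linear_combination -hsymm / 4

theorem sum_inv_sin_sq (R : ℕ) (hR : 1 ≤ R) :
    ∑ μ ∈ Finset.Icc 1 R, (1 : ℝ) / (2 * Real.sin (Real.pi * μ / (2 * R + 1)) ^ 2) =
      (R : ℝ) * (R + 1) / 3 :=
  sum_inv_sin_sq_general R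
end
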